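/- In the rank-one case G = {id, σ} on ℝ with σ(x) = −x and multiplicity k ≥ 0, the function E_k(z,w) = j_{k−1/2}(izw) + (zw/(2k+1)) j_{k+1/2}(izw) satisfies T(k)E_k(·,w)(x) = w·E_k(x,w) and E_k(0,w) = 1, where T(k)f(x) = f'(x) + k(f(x) − f(−x))/x is the rank-one Dunkl operator and j_α(z) = Γ(α+1) Σ_{n≥0} (−1)^n (z/2)^{2n}/(n! Γ(n+α+1)). -/

import Mathlib

open Complex

/-- The normalized spherical Bessel function
`j_α(z) = Γ(α+1) Σ_{n≥0} (−1)^n (z/2)^{2n} / (n! Γ(n+α+1))`, as an entire function of `z`. -/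
noncomputable def besselJC (α : ℝ) (z : ℂ) : ℂ :=
  (Real.Gamma (α + 1) : ℂ) *
    ∑' n : ℕ, ((-1 : ℂ)) ^ n * (z / 2) ^ (2 * n) /
      ((n.factorial : ℂ) * (Real.Gamma ((n : ℝ) + α + 1) : ℂ))

/-- The rank-one Dunkl kernel
`E_k(z,w) = j_{k−1/2}(izw) + (zw/(2k+1)) j_{k+1/2}(izw)`. -/
noncomputable def rankOneDunklKernel (k : ℝ) (z w : ℂ) : ℂ :=
  besselJC (k - 1/2) (Complex.I * z * w) +
    z * w / (2 * k + 1) * besselJC (k + 1/2) (Complex.I * z * w)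




lemma gammaArg_pos {α : ℝ} (hα : -(1/2) ≤ α) (n : ℕ) : 0 < (n : ℝ) + α + 1 := by
  have : (0:ℝ) ≤ n := n.cast_nonneg
  linarith

lemma gamma_pos' {α : ℝ} (hα : -(1/2) ≤ α) (n : ℕ) :
    0 < Real.Gamma ((n : ℝ) + α + 1) :=
  Real.Gamma_pos_of_pos (gammaArg_pos hα n)

lemma gamma_lb {α : ℝ} (hα : -(1/2) ≤ α) (n : ℕ) :
    Real.Gamma (α + 1) * n.factorial ≤ 2 ^ n * Real.Gamma ((n : ℝ) + α + 1) := by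
  induction n with
  | zero => simp [Real.Gamma_pos_of_pos, le_of_eq]
  | succ n ih =>
    have h1 : ((n:ℝ) + α + 1) ≠ 0 := ne_of_gt (gammaArg_pos hα n)
    have h2 : Real.Gamma ((n+1 : ℕ) + α + 1) = ((n:ℝ) + α + 1) * Real.Gamma ((n:ℝ) + α + 1) := by
      push_cast
      rw [show (n:ℝ) + 1 + α + 1 = ((n:ℝ) + α + 1) + 1 by ring, Real.Gamma_add_one h1]
    have hΓpos := gamma_pos' hα n
    have hfac : (0:ℝ) < n.factorial := by positivity
    have hb : ((n:ℝ) + 1) * Real.Gamma ((n:ℝ)+α+1) ≤ 2 * (((n:ℝ)+α+1) * Real.Gamma ((n:ℝ)+α+1)) := by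
      nlinarith
    calc Real.Gamma (α+1) * (n+1).factorial
        = ((n:ℝ)+1) * (Real.Gamma (α+1) * n.factorial) := by
          push_cast [Nat.factorial_succ]; ring
      _ ≤ ((n:ℝ)+1) * (2 ^ n * Real.Gamma ((n:ℝ)+α+1)) := by
          apply mul_le_mul_of_nonneg_left ih (by positivity)
      _ = 2 ^ n * (((n:ℝ)+1) * Real.Gamma ((n:ℝ)+α+1)) := by ring
      _ ≤ 2 ^ n * (2 * (((n:ℝ)+α+1) * Real.Gamma ((n:ℝ)+α+1))) := by
          apply mul_le_mul_of_nonneg_left hb (by positivity)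
      _ = 2 ^ (n+1) * Real.Gamma ((n+1:ℕ) + α + 1) := by rw [h2]; push_cast; ring

set_option maxHeartbeats 1000000 in
lemma summable_master {α : ℝ} (hα : -(1/2) ≤ α) {r : ℝ} (hr : 0 ≤ r) :
    Summable (fun n : ℕ => ((n:ℝ) + 1) * r ^ (2*n) / (n.factorial * Real.Gamma ((n:ℝ) + α + 1))) := by
  have hΓ0 : 0 < Real.Gamma (α + 1) := Real.Gamma_pos_of_pos (by linarith)
  refine Summable.of_nonneg_of_le (f := fun n : ℕ => (4*r^2) ^ n / n.factorial / Real.Gamma (α+1))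
    (fun n => div_nonneg (by positivity) (mul_nonneg (Nat.cast_nonneg _) (gamma_pos' hα n).le))
    (fun n => ?_) ((Real.summable_pow_div_factorial (4*r^2)).div_const _)
  have hΓpos := gamma_pos' hα n
  have hfac : (0:ℝ) < n.factorial := by positivity
  have hlb := gamma_lb hα n
  -- (n+1) * r^(2n) / (n! Γ(n+α+1)) ≤ 4^n r^(2n) / (n! Γ(α+1))
  have hn1 : ((n:ℝ) + 1) ≤ 2 ^ n := by
    exact_mod_cast Nat.lt_two_pow_self (n := n)
  rw [div_div, div_le_div_iff₀ (by positivity) (by positivity)]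
  have hrpow : r ^ (2*n) = (r^2)^n := by rw [pow_mul]
  have key : Real.Gamma (α+1) * (n.factorial:ℝ) ≤ 2 ^ n * Real.Gamma ((n:ℝ)+α+1) := hlb
  calc ((n:ℝ)+1) * r^(2*n) * ((n.factorial:ℝ) * Real.Gamma (α+1))
      ≤ 2^n * (r^2)^n * ((n.factorial:ℝ) * Real.Gamma (α+1)) := by
        rw [hrpow]; apply mul_le_mul_of_nonneg_right
          (mul_le_mul_of_nonneg_right hn1 (by positivity)) (by positivity)
    _ = (2^n * (n.factorial * Real.Gamma (α+1))) * (r^2)^n := by ring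
    _ ≤ (2^n * (2^n * Real.Gamma ((n:ℝ)+α+1))) * (r^2)^n := by
        apply mul_le_mul_of_nonneg_right
          (mul_le_mul_of_nonneg_left (by linarith [key]) (by positivity)) (by positivity)
    _ = (4*r^2)^n * Real.Gamma ((n:ℝ)+α+1) := by
        rw [mul_pow, show (4:ℝ)^n = 2^n*2^n from by rw [show (4:ℝ)=2*2 by norm_num, mul_pow]]
        ring
    _ ≤ (4*r^2)^n * ((n.factorial:ℝ) * Real.Gamma ((n:ℝ)+α+1)) := by
        have h1 : (1:ℝ) ≤ n.factorial := by exact_mod_cast n.factorial_pos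
        apply mul_le_mul_of_nonneg_left (le_mul_of_one_le_left hΓpos.le h1) (by positivity)

noncomputable def gterm (α : ℝ) (z : ℂ) (n : ℕ) : ℂ :=
  (z / 2) ^ (2 * n) / ((n.factorial : ℂ) * (Real.Gamma ((n : ℝ) + α + 1) : ℂ))

noncomputable def Fk (α : ℝ) (z : ℂ) : ℂ := ∑' n : ℕ, gterm α z n

lemma norm_gterm {α : ℝ} (hα : -(1/2) ≤ α) (z : ℂ) (n : ℕ) :
    ‖gterm α z n‖ = ‖z/2‖ ^ (2*n) / (n.factorial * Real.Gamma ((n:ℝ) + α + 1)) := by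
  have hΓ := gamma_pos' hα n
  simp [gterm, norm_div, norm_pow, Complex.norm_natCast, Complex.norm_real,
    Real.norm_eq_abs, abs_of_pos hΓ]

lemma summable_gterm {α : ℝ} (hα : -(1/2) ≤ α) (z : ℂ) : Summable (gterm α z) := by
  refine Summable.of_norm_bounded (summable_master hα (norm_nonneg (z/2))) fun n => ?_
  rw [norm_gterm hα]
  have hΓ := gamma_pos' hα n
  have hfac : (0:ℝ) < n.factorial := by positivity
  gcongr
  nlinarith [pow_nonneg (norm_nonneg (z/2)) (2*n)]

lemma summable_ngterm {α : ℝ} (hα : -(1/2) ≤ α) (z : ℂ) :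
    Summable (fun n : ℕ => (n : ℂ) * gterm α z n) := by
  refine Summable.of_norm_bounded (summable_master hα (norm_nonneg (z/2))) fun n => ?_
  rw [norm_mul, norm_gterm hα, Complex.norm_natCast]
  have hΓ := gamma_pos' hα n
  have hfac : (0:ℝ) < n.factorial := by positivity
  rw [mul_div_assoc']
  gcongr
  nlinarith [pow_nonneg (norm_nonneg (z/2)) (2*n)]

lemma summable_dterm {α : ℝ} (hα : -(1/2) ≤ α) {M : ℝ} (hM : 1 ≤ M) {y : ℂ}
    (hy : ‖y‖ < 2*M) (n : ℕ) :
    ‖(((2*n : ℕ) : ℂ) * (y/2)^(2*n-1) * (1/2)) / ((n.factorial : ℂ) * (Real.Gamma ((n : ℝ) + α + 1) : ℂ))‖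
      ≤ ((n:ℝ) + 1) * M ^ (2*n) / (n.factorial * Real.Gamma ((n:ℝ) + α + 1)) := by
  have hΓ := gamma_pos' hα n
  have hfac : (0:ℝ) < n.factorial := by positivity
  have hy2 : ‖y/2‖ ≤ M := by
    rw [norm_div, Complex.norm_ofNat]
    linarith
  have hM0 : (0:ℝ) ≤ M := by linarith
  have hpow : ‖y/2‖ ^ (2*n-1) ≤ M ^ (2*n) :=
    le_trans (pow_le_pow_left₀ (norm_nonneg _) hy2 _) (pow_le_pow_right₀ hM (Nat.sub_le _ _))
  have hnorm : ‖(((2*n : ℕ) : ℂ) * (y/2)^(2*n-1) * (1/2)) / ((n.factorial : ℂ) * (Real.Gamma ((n : ℝ) + α + 1) : ℂ))‖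
      = (2*n) * ‖y/2‖^(2*n-1) * (1/2) / (n.factorial * Real.Gamma ((n:ℝ)+α+1)) := by
    simp [norm_div, norm_mul, norm_pow, Complex.norm_natCast, Complex.norm_real,
      Real.norm_eq_abs, abs_of_pos hΓ]
  rw [hnorm]
  gcongr ?_ / _
  have h1 : (2*(n:ℝ)) * ‖y/2‖^(2*n-1) * (1/2) = (n:ℝ) * ‖y/2‖^(2*n-1) := by ring
  push_cast
  rw [h1]
  nlinarith [pow_nonneg (norm_nonneg (y/2)) (2*n-1), pow_nonneg hM0 (2*n),
    (Nat.cast_nonneg n : (0:ℝ) ≤ n), hpow]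

lemma hasDerivAt_Fk {α : ℝ} (hα : -(1/2) ≤ α) (z : ℂ) :
    HasDerivAt (Fk α) (z/2 * Fk (α+1) z) z := by
  set M : ℝ := 1 + ‖z‖ with hMdef
  have hM : 1 ≤ M := by rw [hMdef]; linarith [norm_nonneg z]
  have hzmem : z ∈ Metric.ball (0:ℂ) (2*M) := by
    rw [Metric.mem_ball, dist_zero_right, hMdef]
    linarith [norm_nonneg z]
  have key : HasDerivAt (fun y => ∑' n : ℕ, gterm α y n)
      (∑' n : ℕ, (((2*n : ℕ) : ℂ) * (z/2)^(2*n-1) * (1/2)) /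
        ((n.factorial : ℂ) * (Real.Gamma ((n : ℝ) + α + 1) : ℂ))) z := by
    refine hasDerivAt_tsum_of_isPreconnected
      (u := fun n : ℕ => ((n:ℝ) + 1) * M ^ (2*n) / (n.factorial * Real.Gamma ((n:ℝ) + α + 1)))
      (g := fun n y => gterm α y n)
      (g' := fun (n : ℕ) (y : ℂ) => (((2*n : ℕ) : ℂ) * (y/2)^(2*n-1) * (1/2)) /
        ((n.factorial : ℂ) * (Real.Gamma ((n : ℝ) + α + 1) : ℂ)))
      (summable_master hα (by linarith)) Metric.isOpen_ball
      ((convex_ball _ _).isPreconnected) (fun n y hy => ?_) (fun n y hy => ?_)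
      hzmem (summable_gterm hα z) hzmem
    · have h := (((hasDerivAt_id y).div_const (2:ℂ)).pow (2*n)).div_const
        ((n.factorial : ℂ) * (Real.Gamma ((n : ℝ) + α + 1) : ℂ))
      simpa [gterm] using h
    · have hy' : ‖y‖ < 2*M := by
        simpa only [Metric.mem_ball, dist_zero_right] using hy
      exact summable_dterm hα hM hy' n
  have hsum : Summable (fun n : ℕ => (((2*n : ℕ) : ℂ) * (z/2)^(2*n-1) * (1/2)) /
      ((n.factorial : ℂ) * (Real.Gamma ((n : ℝ) + α + 1) : ℂ))) := by
    refine Summable.of_norm_bounded (summable_master hα (by linarith : (0:ℝ) ≤ M)) fun n => ?_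
    have hz' : ‖z‖ < 2*M := by rw [hMdef]; linarith [norm_nonneg z]
    exact summable_dterm hα hM hz' n
  have hshift : (∑' n : ℕ, (((2*n : ℕ) : ℂ) * (z/2)^(2*n-1) * (1/2)) /
      ((n.factorial : ℂ) * (Real.Gamma ((n : ℝ) + α + 1) : ℂ))) = z/2 * Fk (α+1) z := by
    rw [Summable.tsum_eq_zero_add hsum]
    simp only [Nat.mul_zero, Nat.cast_zero, zero_mul, zero_div, zero_add]
    rw [show (z/2 * Fk (α+1) z) = ∑' n : ℕ, z/2 * gterm (α+1) z n from (tsum_mul_left).symm]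
    refine tsum_congr fun n => ?_
    have hfa : ((n+1).factorial : ℂ) = ((n:ℂ)+1) * (n.factorial : ℂ) := by
      push_cast [Nat.factorial_succ]; ring
    have hΓeq : Real.Gamma (((n+1 : ℕ) : ℝ) + α + 1) = Real.Gamma ((n : ℝ) + (α+1) + 1) := by
      push_cast
      ring_nf
    have hexp : 2*(n+1) - 1 = 2*n + 1 := by omega
    have hΓ := gamma_pos' (by linarith : -(1/2) ≤ α+1) n
    have hΓne : (Real.Gamma ((n:ℝ) + (α+1) + 1) : ℂ) ≠ 0 := by
      exact_mod_cast Complex.ofReal_ne_zero.mpr hΓ.ne'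
    have hfne : ((n.factorial : ℂ)) ≠ 0 := by
      exact Nat.cast_ne_zero.mpr (Nat.factorial_pos n).ne'
    have hn1 : ((n:ℂ)+1) ≠ 0 := Nat.cast_add_one_ne_zero n
    rw [hexp, hΓeq, hfa]
    unfold gterm
    rw [pow_succ]
    push_cast
    field_simp [hn1, hfne, hΓne]
  rw [hshift] at key
  exact key

lemma Fk_neg (α : ℝ) (z : ℂ) : Fk α (-z) = Fk α z := by
  unfold Fk gterm
  refine tsum_congr fun n => ?_
  rw [neg_div, Even.neg_pow (even_two_mul n)]

lemma Fk_rec {α : ℝ} (hα : (1:ℝ)/2 ≤ α) (z : ℂ) :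
    Fk (α-1) z = (α:ℂ) * Fk α z + (z/2)^2 * Fk (α+1) z := by
  have hα0 : -(1/2) ≤ α := by linarith
  have h1 : Summable (fun n : ℕ => (α:ℂ) * gterm α z n) := (summable_gterm hα0 z).mul_left _
  have h2 : Summable (fun n : ℕ => (n:ℂ) * gterm α z n) := summable_ngterm hα0 z
  have step1 : Fk (α-1) z = ∑' n : ℕ, ((α:ℂ) * gterm α z n + (n:ℂ) * gterm α z n) := by
    refine tsum_congr fun n => ?_
    have hne : ((n:ℝ) + α) ≠ 0 := by positivity
    have hΓ : Real.Gamma ((n:ℝ) + α + 1) = ((n:ℝ)+α) * Real.Gamma ((n:ℝ)+α) :=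
      Real.Gamma_add_one hne
    have hΓpos : 0 < Real.Gamma ((n:ℝ)+α) := Real.Gamma_pos_of_pos (by positivity)
    have hargs : (n:ℝ) + (α-1) + 1 = (n:ℝ) + α := by ring
    unfold gterm
    rw [hargs, hΓ]
    have hfne : ((n.factorial : ℂ)) ≠ 0 := Nat.cast_ne_zero.mpr (Nat.factorial_pos n).ne'
    have hΓne : ((Real.Gamma ((n:ℝ)+α) : ℝ) : ℂ) ≠ 0 := Complex.ofReal_ne_zero.mpr hΓpos.ne'
    have hnane : ((n:ℂ) + (α:ℂ)) ≠ 0 := by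
      have : ((((n:ℝ) + α) : ℝ) : ℂ) ≠ 0 := Complex.ofReal_ne_zero.mpr hne
      push_cast at this
      exact this
    push_cast
    field_simp
    ring
  rw [step1, Summable.tsum_add h1 h2, tsum_mul_left]
  congr 1
  rw [Summable.tsum_eq_zero_add h2]
  simp only [Nat.cast_zero, zero_mul, zero_add]
  rw [show ((z/2)^2 * Fk (α+1) z) = ∑' n : ℕ, (z/2)^2 * gterm (α+1) z n from (tsum_mul_left).symm]
  refine tsum_congr fun n => ?_
  have hfa : (((n+1).factorial : ℕ) : ℂ) = ((n:ℂ)+1) * (n.factorial : ℂ) := by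
    push_cast [Nat.factorial_succ]; ring
  have hΓeq : Real.Gamma (((n+1 : ℕ) : ℝ) + α + 1) = Real.Gamma ((n : ℝ) + (α+1) + 1) := by
    push_cast; ring_nf
  have hΓ := gamma_pos' (by linarith : -(1/2) ≤ α+1) n
  have hΓne : ((Real.Gamma ((n:ℝ) + (α+1) + 1) : ℝ) : ℂ) ≠ 0 := Complex.ofReal_ne_zero.mpr hΓ.ne'
  have hfne : ((n.factorial : ℂ)) ≠ 0 := Nat.cast_ne_zero.mpr (Nat.factorial_pos n).ne'
  have hn1 : ((n:ℂ)+1) ≠ 0 := Nat.cast_add_one_ne_zero n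
  unfold gterm
  rw [hΓeq, hfa, show 2*(n+1) = 2*n + 2 by ring, pow_add]
  push_cast
  field_simp [hn1, hfne, hΓne]

lemma Fk_zero (α : ℝ) : Fk α 0 = ((Real.Gamma (α+1) : ℝ) : ℂ)⁻¹ := by
  unfold Fk gterm
  rw [tsum_eq_single 0 (fun n hn => ?_)]
  · norm_num
  · rw [zero_div, zero_pow (by omega : 2*n ≠ 0), zero_div]

lemma besselJC_eq (α : ℝ) (u : ℂ) :
    besselJC α (Complex.I * u) = (Real.Gamma (α+1) : ℂ) * Fk α u := by
  unfold besselJC Fk gterm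
  congr 1
  refine tsum_congr fun n => ?_
  have h : (Complex.I * u / 2)^(2*n) = ((-1:ℂ))^n * (u/2)^(2*n) := by
    rw [mul_div_assoc, mul_pow, pow_mul, Complex.I_sq]
  rw [h, ← mul_assoc, ← mul_pow, neg_mul_neg, one_mul, one_pow, one_mul]

set_option maxHeartbeats 2000000 in
/-- in the rank-one case (`G = {id, σ}` on `ℝ`, `σ(x) = −x`, `k ≥ 0`), the
function `E_k(·,w)` satisfies `T(k)E_k(·,w)(x) = w·E_k(x,w)` (for `x ≠ 0`, where the
operator `T(k)f(x) = f'(x) + k (f(x) − f(−x))/x` is defined) and `E_k(0,w) = 1`. -/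
theorem rankOne_dunkl_kernel_eigenfunction (k : ℝ) (hk : 0 ≤ k) (w : ℂ) :
    (∀ x : ℝ, x ≠ 0 →
      deriv (fun t : ℝ => rankOneDunklKernel k (t : ℂ) w) x
        + (k : ℂ) * (rankOneDunklKernel k (x : ℂ) w - rankOneDunklKernel k (-(x : ℂ)) w)
            / (x : ℂ)
      = w * rankOneDunklKernel k (x : ℂ) w)
    ∧ rankOneDunklKernel k 0 w = 1 := by
  have hk1 : -(1/2) ≤ k - 1/2 := by linarith
  have hk2 : -(1/2) ≤ k + 1/2 := by linarith
  have hker : ∀ z : ℂ, rankOneDunklKernel k z w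
      = (Real.Gamma (k - 1/2 + 1) : ℂ) * Fk (k - 1/2) (z*w)
        + z * w / (2*(k:ℂ)+1) * ((Real.Gamma (k + 1/2 + 1) : ℂ) * Fk (k + 1/2) (z*w)) := by
    intro z
    unfold rankOneDunklKernel
    rw [mul_assoc Complex.I z w, besselJC_eq, besselJC_eq]
  have h2k1 : (2*(k:ℂ)+1) ≠ 0 := by
    have : ((2*k+1 : ℝ) : ℂ) ≠ 0 := Complex.ofReal_ne_zero.mpr (by linarith)
    push_cast at this
    exact this
  constructor
  · intro x hx
    have hxc : (x:ℂ) ≠ 0 := Complex.ofReal_ne_zero.mpr hx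
    set u : ℂ := (x:ℂ) * w with hu
    set G1 : ℂ := (Real.Gamma (k - 1/2 + 1) : ℂ) with hG1
    set G2 : ℂ := (Real.Gamma (k + 1/2 + 1) : ℂ) with hG2
    have hd1 : HasDerivAt (fun z : ℂ => Fk (k-1/2) (z*w)) ((u/2 * Fk (k+1/2) u) * w) (x:ℂ) := by
      have h := (hasDerivAt_Fk hk1 u).comp (x:ℂ) (hasDerivAt_mul_const w)
      rw [show (k - 1/2 + 1 : ℝ) = k + 1/2 by ring] at h
      simpa [Function.comp_def, hu] using h
    have hd2 : HasDerivAt (fun z : ℂ => Fk (k+1/2) (z*w)) ((u/2 * Fk (k+1/2+1) u) * w) (x:ℂ) := by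
      have h := (hasDerivAt_Fk hk2 u).comp (x:ℂ) (hasDerivAt_mul_const w)
      simpa [Function.comp_def, hu] using h
    have hc : HasDerivAt (fun z : ℂ => z * w / (2*(k:ℂ)+1)) (w / (2*(k:ℂ)+1)) (x:ℂ) :=
      (hasDerivAt_mul_const w).div_const _
    have hE : HasDerivAt (fun z : ℂ => rankOneDunklKernel k z w)
        (G1 * ((u/2 * Fk (k+1/2) u) * w)
          + (w / (2*(k:ℂ)+1) * (G2 * Fk (k+1/2) u)
             + u / (2*(k:ℂ)+1) * (G2 * ((u/2 * Fk (k+1/2+1) u) * w)))) (x:ℂ) := by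
      have h := (hd1.const_mul G1).add (hc.mul (hd2.const_mul G2))
      rw [show (fun z : ℂ => rankOneDunklKernel k z w)
        = fun z : ℂ => G1 * Fk (k - 1/2) (z*w)
            + z * w / (2*(k:ℂ)+1) * (G2 * Fk (k + 1/2) (z*w)) from funext hker]
      refine h.congr_deriv ?_
      all_goals (rw [hu])
    have hder : deriv (fun t : ℝ => rankOneDunklKernel k (t : ℂ) w) x
        = G1 * ((u/2 * Fk (k+1/2) u) * w)
          + (w / (2*(k:ℂ)+1) * (G2 * Fk (k+1/2) u)
             + u / (2*(k:ℂ)+1) * (G2 * ((u/2 * Fk (k+1/2+1) u) * w))) :=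
      (hE.comp_ofReal).deriv
    have hEx : rankOneDunklKernel k (x:ℂ) w
        = G1 * Fk (k-1/2) u + u / (2*(k:ℂ)+1) * (G2 * Fk (k+1/2) u) := by
      rw [hker (x:ℂ)]
    have hEnx : rankOneDunklKernel k (-(x:ℂ)) w
        = G1 * Fk (k-1/2) u - u / (2*(k:ℂ)+1) * (G2 * Fk (k+1/2) u) := by
      rw [hker (-(x:ℂ)), show (-(x:ℂ))*w = -u by rw [hu]; ring, Fk_neg, Fk_neg]
      ring
    have hrec := Fk_rec (show (1:ℝ)/2 ≤ k + 1/2 by linarith) u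
    rw [show (k + 1/2 - 1 : ℝ) = k - 1/2 by ring] at hrec
    have hGrel : G2 = ((k:ℂ) + 1/2) * G1 := by
      rw [hG1, hG2, show (k + 1/2 + 1 : ℝ) = (k + 1/2) + 1 by ring,
        Real.Gamma_add_one (by positivity : (k + 1/2 : ℝ) ≠ 0),
        show (k - 1/2 + 1 : ℝ) = k + 1/2 by ring]
      push_cast
      ring
    have hcast : ((k + 1/2 : ℝ) : ℂ) = (k:ℂ) + 1/2 := by push_cast; ring
    have hq : (k:ℂ) * (rankOneDunklKernel k (x:ℂ) w - rankOneDunklKernel k (-(x:ℂ)) w) / (x:ℂ)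
        = 2*(k:ℂ)*(w/(2*(k:ℂ)+1)*(G2 * Fk (k+1/2) u)) := by
      rw [hEx, hEnx, hu]
      field_simp
      ring
    rw [hder, hq, hEx, hrec, hGrel, hcast]
    set F1 : ℂ := Fk (k+1/2) u with hF1
    set F2 : ℂ := Fk (k+1/2+1) u with hF2
    rw [hu]
    have hI : (2*(k:ℂ)+1) * (2*(k:ℂ)+1)⁻¹ = 1 := mul_inv_cancel₀ h2k1
    simp only [div_eq_mul_inv]
    linear_combination (G1*((2*(k:ℂ)+1)*w*F1/2 + (x:ℂ)^2*w^3*F2/4 - (x:ℂ)*w^2*F1/2)) * hI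
  · rw [hker 0, zero_mul, Fk_zero]
    have hΓpos : 0 < Real.Gamma (k - 1/2 + 1) := by
      rw [show (k - 1/2 + 1 : ℝ) = k + 1/2 by ring]
      exact Real.Gamma_pos_of_pos (by linarith)
    have hne : ((Real.Gamma (k - 1/2 + 1) : ℝ) : ℂ) ≠ 0 := Complex.ofReal_ne_zero.mpr hΓpos.ne'
    rw [zero_div, zero_mul, add_zero, mul_inv_cancel₀ hne]
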